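/- (Thompson–Freede analogue.) Let A and B be admissible pseudo-Hermitian n×n matrices, and suppose C = A + B is also admissible. Denote by λ_p(·) ≥ … ≥ λ_1(·) > μ_1(·) ≥ … ≥ μ_q(·) the eigenvalues of each of A, B, C. Let 1 ≤ i_1 < i_2 < … < i_m ≤ p and 1 ≤ j_1 < j_2 < … < j_m ≤ p be two m-tuples of integers with i_m + j_m ≤ m + p. Then Σ_{h=1}^m λ_{i_h + j_h − h}(C) ≥ Σ_{h=1}^m λ_{i_h}(A) + Σ_{h=1}^m λ_{j_h}(B). -/

import Mathlib

/-!
The argument is the Hersch–Zwahlen proof of the Thompson–Freede inequality, run with the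
indefinite pairing in place of an inner product. Writing `M = U Λ U⁻¹` with `U` a
`J`-isometry, the columns of `U` are a `J`-orthonormal eigenbasis; on the span `E_k` of the
eigenvectors of `λ_1, …, λ_k` the pairing is positive definite and `⟨Mx, x⟩ ≤ λ_k ⟨x, x⟩`,
while on the span `S_i` of the eigenvectors of `λ_i, …, λ_p, μ_1, …, μ_q` one has
`⟨Mx, x⟩ ≥ λ_i ⟨x, x⟩`, because every `μ` lies below `λ_1`.

A dimension count, by induction on `m` after dividing out a line of
`E_{k_1} ∩ S_{i_1} ∩ S_{j_1}`, gives an `m`-dimensional `X` with `dim (X ∩ E_{k_h}) ≥ h` for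
the flag of `C` (where `k_h = i_h + j_h − h`) and `dim (X ∩ S_{i_h}) ≥ m − h + 1`,
`dim (X ∩ S_{j_h}) ≥ m − h + 1` for the flags of `A` and `B`. Since `X ⊆ E_{k_m}`, the pairing
is an inner product on `X`, so `X` has orthonormal bases adapted to each of the three flags,
while `Σ_h ⟨M x_h, x_h⟩` is the same for every orthonormal basis `(x_h)` of `X`. Evaluating
this trace of `C = A + B` in the three bases gives the inequality.
-/

open Matrix

/-- The signature matrix `J = diag(1,…,1,−1,…,−1)` with `p` ones and `q` minus-ones. -/
noncomputable def Jmat (p q : ℕ) : Matrix (Fin (p + q)) (Fin (p + q)) ℂ :=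
  Matrix.diagonal (fun i => if (i : ℕ) < p then 1 else -1)

/-- The indefinite pairing `⟨z,w⟩ = Σ_{i<p} z_i conj(w_i) − Σ_{i≥p} z_i conj(w_i)`;
equivalently `w† · z` where `x† = (J conj(x))ᵀ`. -/
noncomputable def pairing (p q : ℕ) (z w : Fin (p + q) → ℂ) : ℂ :=
  ∑ i : Fin (p + q),
    (if (i : ℕ) < p then z i * (starRingEnd ℂ) (w i) else -(z i * (starRingEnd ℂ) (w i)))

/-- The diagonal entries of `Λ = diag(λ_p, …, λ_1, μ_1, …, μ_q)`, where `lam` and `mu`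
are 0-indexed: `lam i = λ_{i+1}` and `mu j = μ_{j+1}`. -/
noncomputable def diagEntries (p q : ℕ) (lam : Fin p → ℝ) (mu : Fin q → ℝ) :
    Fin (p + q) → ℂ :=
  fun i =>
    if h : (i : ℕ) < p then ((lam ⟨p - 1 - (i : ℕ), by omega⟩ : ℝ) : ℂ)
    else ((mu ⟨(i : ℕ) - p, by have := i.isLt; omega⟩ : ℝ) : ℂ)

/-- `A` is an admissible pseudo-Hermitian matrix with (real) eigenvalues
`λ_p ≥ … ≥ λ_1 > μ_1 ≥ … ≥ μ_q`, recorded 0-indexed as `lam i = λ_{i+1}` (so `lam` is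
monotone) and `mu j = μ_{j+1}` (so `mu` is antitone), with `λ_1 > μ_1`, and
`A = U Λ U⁻¹` for some invertible `U` with `U J Uᴴ = J`. -/
def IsAdmissible (p q : ℕ) (hp : 0 < p) (hq : 0 < q)
    (A : Matrix (Fin (p + q)) (Fin (p + q)) ℂ)
    (lam : Fin p → ℝ) (mu : Fin q → ℝ) : Prop :=
  A * Jmat p q = Jmat p q * A.conjTranspose ∧
  Monotone lam ∧ Antitone mu ∧ mu ⟨0, hq⟩ < lam ⟨0, hp⟩ ∧
  ∃ U : Matrix (Fin (p + q)) (Fin (p + q)) ℂ,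
    IsUnit U ∧ U * Jmat p q * U.conjTranspose = Jmat p q ∧
    A = U * Matrix.diagonal (diagEntries p q lam mu) * U⁻¹

/-- The Rayleigh ratio `R_A(x) = (x† A x)/(x† x)`, as a real number (for admissible
pseudo-Hermitian `A` both `x† A x` and `x† x` are real). -/
noncomputable def rayleigh (p q : ℕ) (A : Matrix (Fin (p + q)) (Fin (p + q)) ℂ)
    (x : Fin (p + q) → ℂ) : ℝ :=
  (pairing p q (A.mulVec x) x).re / (pairing p q x x).re

open Module Submodule

section Flags

variable {K V : Type*} [Field K] [AddCommGroup V] [Module K V]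

theorem Submodule.finrank_add_finrank_le_finrank_inf_add_finrank [FiniteDimensional K V]
    (S T : Submodule K V) : finrank K S + finrank K T ≤ finrank K ↥(S ⊓ T) + finrank K V := by
  have := finrank_sup_add_finrank_inf_eq S T
  have := (S ⊔ T).finrank_le
  omega

theorem Submodule.finrank_le_finrank_inf_ker_add_one [FiniteDimensional K V] (S : Submodule K V)
    (φ : V →ₗ[K] K) : finrank K S ≤ finrank K ↥(S ⊓ LinearMap.ker φ) + 1 := by
  have := finrank_add_finrank_le_finrank_inf_add_finrank S (LinearMap.ker φ)
  have := LinearMap.finrank_range_add_finrank_ker φ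
  have : finrank K (LinearMap.range φ) ≤ 1 := (finrank_le _).trans (finrank_self K).le
  omega

theorem Submodule.finrank_map_mkQ_add_finrank_inf [FiniteDimensional K V] (N S : Submodule K V) :
    finrank K (S.map N.mkQ) + finrank K ↥(S ⊓ N) = finrank K S := by
  have h := LinearMap.finrank_range_add_finrank_ker (N.mkQ.domRestrict S)
  rwa [LinearMap.range_domRestrict, LinearMap.ker_domRestrict, ker_mkQ,
    ← finrank_map_subtype_eq, map_comap_subtype] at h

theorem Submodule.finrank_map_mkQ_inf_add_finrank_inf [FiniteDimensional K V]
    (N S : Submodule K V) (Y : Submodule K (V ⧸ N)) :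
    finrank K ↥(S.map N.mkQ ⊓ Y) + finrank K ↥(S ⊓ N) =
      finrank K ↥(S ⊓ Y.comap N.mkQ) := by
  have hN : N ≤ Y.comap N.mkQ := by simpa using LinearMap.ker_le_comap (p := Y) N.mkQ
  rw [map_inf_eq_map_inf_comap, ← finrank_map_mkQ_add_finrank_inf N (S ⊓ Y.comap N.mkQ),
    inf_assoc, inf_eq_right.mpr hN]

theorem Submodule.finrank_inf_span_singleton_of_mem {S : Submodule K V} {x : V} (hx0 : x ≠ 0)
    (hx : x ∈ S) : finrank K ↥(S ⊓ K ∙ x) = 1 := by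
  rw [inf_eq_right.mpr ((span_singleton_le_iff_mem x S).mpr hx), finrank_span_singleton hx0]

theorem Submodule.finrank_inf_span_singleton_of_notMem {S : Submodule K V} {x : V} (hx : x ∉ S) :
    finrank K ↥(S ⊓ K ∙ x) = 0 := by
  rw [(disjoint_span_singleton_of_notMem hx).eq_bot, finrank_bot]

theorem Submodule.exists_mem_inf_inf_ne_zero [FiniteDimensional K V] {S T W : Submodule K V}
    (h : 2 * finrank K V < finrank K S + finrank K T + finrank K W) :
    ∃ x ∈ S ⊓ T ⊓ W, x ≠ 0 := by
  refine exists_mem_ne_zero_of_ne_bot fun hbot => ?_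
  have := finrank_add_finrank_le_finrank_inf_add_finrank S T
  have := finrank_add_finrank_le_finrank_inf_add_finrank (S ⊓ T) W
  rw [hbot, finrank_bot] at this
  omega

section Line

variable [FiniteDimensional K V] {S : Submodule K V} {x : V}

theorem Submodule.finrank_map_mkQ_add_one (hx0 : x ≠ 0) (hx : x ∈ S) :
    finrank K (S.map (K ∙ x).mkQ) + 1 = finrank K S := by
  rw [← finrank_inf_span_singleton_of_mem hx0 hx, finrank_map_mkQ_add_finrank_inf]

theorem Submodule.finrank_map_mkQ_of_notMem (hx : x ∉ S) :
    finrank K (S.map (K ∙ x).mkQ) = finrank K S := by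
  rw [← finrank_map_mkQ_add_finrank_inf (K ∙ x) S, finrank_inf_span_singleton_of_notMem hx,
    add_zero]

theorem Submodule.finrank_map_mkQ_inf_add_one (hx0 : x ≠ 0) (hx : x ∈ S)
    (Y : Submodule K (V ⧸ K ∙ x)) :
    finrank K ↥(S.map (K ∙ x).mkQ ⊓ Y) + 1 = finrank K ↥(S ⊓ Y.comap (K ∙ x).mkQ) := by
  rw [← finrank_inf_span_singleton_of_mem hx0 hx, finrank_map_mkQ_inf_add_finrank_inf]

theorem Submodule.finrank_map_mkQ_inf_le (N S : Submodule K V) (Y : Submodule K (V ⧸ N)) :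
    finrank K ↥(S.map N.mkQ ⊓ Y) ≤ finrank K ↥(S ⊓ Y.comap N.mkQ) := by
  rw [← finrank_map_mkQ_inf_add_finrank_inf N S Y]
  exact Nat.le_add_right _ _

end Line

theorem Fin.exists_forall_iff_le_of_antitone {m : ℕ} {P : Fin (m + 1) → Prop} (hP : Antitone P)
    (h0 : P 0) : ∃ a, ∀ h, P h ↔ h ≤ a := by
  classical
  have hne : (Finset.univ.filter P).Nonempty := ⟨0, by simpa using h0⟩
  refine ⟨(Finset.univ.filter P).max' hne, fun h => ⟨fun hh => ?_, fun hle => ?_⟩⟩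
  · exact Finset.le_max' _ h (Finset.mem_filter.mpr ⟨Finset.mem_univ _, hh⟩)
  · exact hP hle (Finset.mem_filter.mp (Finset.max'_mem _ hne)).2

theorem Fin.castSucc_le_succAbove {m : ℕ} (a : Fin (m + 1)) (h : Fin m) :
    h.castSucc ≤ a.succAbove h := by
  rcases lt_or_ge h.castSucc a with ha | ha
  · rw [succAbove_of_castSucc_lt a h ha]
  · rw [succAbove_of_le_castSucc a h ha]
    exact castSucc_lt_succ.le

theorem Fin.succAbove_le_succ {m : ℕ} (a : Fin (m + 1)) (h : Fin m) :
    a.succAbove h ≤ h.succ := by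
  rcases lt_or_ge h.castSucc a with ha | ha
  · rw [succAbove_of_castSucc_lt a h ha]
    exact castSucc_lt_succ.le
  · rw [succAbove_of_le_castSucc a h ha]

theorem StrictMono.apply_add_le_apply_add {m : ℕ} {f : Fin m → ℕ} (hf : StrictMono f) {g h : Fin m}
    (hgh : g ≤ h) : f g + h ≤ f h + g := by
  obtain ⟨g, hg⟩ := g
  obtain ⟨h, hh⟩ := h
  simp only [Fin.mk_le_mk] at hgh ⊢
  induction h, hgh using Nat.le_induction with
  | base => rfl
  | succ n hn ih =>
    have := hf (Fin.mk_lt_mk.mpr n.lt_succ_self : (⟨n, by omega⟩ : Fin m) < ⟨n + 1, hh⟩)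
    have := ih (by omega)
    omega

theorem StrictMono.apply_succ_pos {m : ℕ} {f : Fin (m + 1) → ℕ} (hf : StrictMono f) (h : Fin m) :
    0 < f h.succ :=
  (Nat.zero_le _).trans_lt (hf (Fin.succ_pos h))

theorem StrictMono.sub_one_comp_succ {m : ℕ} {f : Fin (m + 1) → ℕ} (hf : StrictMono f) :
    StrictMono fun h : Fin m => f h.succ - 1 := fun g h hgh => by
  have := hf (Fin.succ_lt_succ_iff.mpr hgh)
  have := hf.apply_succ_pos g
  dsimp only
  omega

/-- In the induction, `a` is the last index with `x ∈ A a`. -/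
def quotientFlag {m : ℕ} (A : Fin (m + 1) → Submodule K V) (x : V) (a : Fin (m + 1)) :
    Fin m → Submodule K (V ⧸ K ∙ x) :=
  fun h => (A (a.succAbove h)).map (K ∙ x).mkQ

theorem quotientFlag_antitone {m : ℕ} {A : Fin (m + 1) → Submodule K V} (hA : Antitone A)
    (x : V) (a : Fin (m + 1)) : Antitone (quotientFlag A x a) :=
  fun _ _ hgh => map_mono (hA ((Fin.strictMono_succAbove a).monotone hgh))

section QuotientFlag

variable [FiniteDimensional K V] {m : ℕ} {A : Fin (m + 1) → Submodule K V} {x : V}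
  {a : Fin (m + 1)}

theorem finrank_quotient_le_finrank_quotientFlag_add {i : Fin (m + 1) → ℕ} (hi : StrictMono i)
    (hcodim : ∀ h, finrank K V ≤ finrank K (A h) + i h) (hx0 : x ≠ 0)
    (ha : ∀ h, x ∈ A h ↔ h ≤ a) (h : Fin m) :
    finrank K (V ⧸ K ∙ x) ≤ finrank K (quotientFlag A x a h) + (i h.succ - 1) := by
  have hquot : finrank K (V ⧸ K ∙ x) + 1 = finrank K V := by
    rw [← finrank_quotient_add_finrank (K ∙ x), finrank_span_singleton hx0]
  have := hcodim (a.succAbove h)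
  unfold quotientFlag
  by_cases hxs : x ∈ A (a.succAbove h)
  · have hlt : a.succAbove h < h.succ := by
      have hsa : a.succAbove h < a := lt_of_le_of_ne ((ha _).mp hxs) (a.succAbove_ne h)
      rw [Fin.succAbove_of_castSucc_lt a h ((Fin.succAbove_lt_iff_castSucc_lt a h).mp hsa)]
      exact Fin.castSucc_lt_succ
    have := hi hlt
    have := finrank_map_mkQ_add_one hx0 hxs
    omega
  · have := hi.monotone (a.succAbove_le_succ h)
    have := hi.apply_succ_pos h
    have := finrank_map_mkQ_of_notMem hxs
    omega

theorem le_finrank_inf_comap_of_quotientFlag (hA : Antitone A) (hx0 : x ≠ 0) (hx : x ∈ A 0)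
    (ha : ∀ h, x ∈ A h ↔ h ≤ a) {Y : Submodule K (V ⧸ K ∙ x)}
    (hY : ∀ h, m ≤ finrank K ↥(quotientFlag A x a h ⊓ Y) + h) (h : Fin (m + 1)) :
    m + 1 ≤ finrank K ↥(A h ⊓ Y.comap (K ∙ x).mkQ) + h := by
  unfold quotientFlag at hY
  by_cases hxh : x ∈ A h
  · have := finrank_map_mkQ_inf_add_one hx0 hxh Y
    induction h using Fin.lastCases with
    | last =>
      simp only [Fin.val_last]
      omega
    | cast h =>
      have := finrank_mono (inf_le_inf_right Y
        (map_mono (f := (K ∙ x).mkQ) (hA (a.castSucc_le_succAbove h))))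
      have := hY h
      simp only [Fin.val_castSucc]
      omega
  · have := finrank_map_mkQ_inf_le (K ∙ x) (A h) Y
    induction h using Fin.cases with
    | zero => exact absurd hx hxh
    | succ h =>
      have hah : a ≤ h.castSucc := Fin.le_castSucc_iff.mpr (not_le.mp ((ha _).not.mp hxh))
      have := hY h
      rw [Fin.succAbove_of_le_castSucc a h hah] at this
      simp only [Fin.val_succ]
      omega

end QuotientFlag

theorem exists_subspace_meeting_flags [FiniteDimensional K V] {m : ℕ} {i j : Fin m → ℕ}
    {E A B : Fin m → Submodule K V} (hi : StrictMono i) (hj : StrictMono j) (hE : Monotone E)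
    (hA : Antitone A) (hB : Antitone B) (hEdim : ∀ h, i h + j h + 1 ≤ finrank K (E h) + h)
    (hAcodim : ∀ h, finrank K V ≤ finrank K (A h) + i h)
    (hBcodim : ∀ h, finrank K V ≤ finrank K (B h) + j h) :
    ∃ X : Submodule K V, finrank K X = m ∧ (∀ h, h + 1 ≤ finrank K ↥(E h ⊓ X)) ∧
      (∀ h, m ≤ finrank K ↥(A h ⊓ X) + h) ∧
      ∀ h, m ≤ finrank K ↥(B h ⊓ X) + h := by
  induction m generalizing V with
  | zero => exact ⟨⊥, finrank_bot K V, finZeroElim, finZeroElim, finZeroElim⟩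
  | succ m ih =>
    obtain ⟨x, ⟨⟨hxE, hxA⟩, hxB⟩, hx0⟩ := exists_mem_inf_inf_ne_zero (S := E 0) (T := A 0)
      (W := B 0) (by
        have h0 := hEdim 0
        rw [Fin.val_zero] at h0
        have := hAcodim 0
        have := hBcodim 0
        omega)
    obtain ⟨a, ha⟩ := Fin.exists_forall_iff_le_of_antitone (fun _ _ hgh hx => hA hgh hx) hxA
    obtain ⟨b, hb⟩ := Fin.exists_forall_iff_le_of_antitone (fun _ _ hgh hx => hB hgh hx) hxB
    have hxE' : ∀ h, x ∈ E h := fun h => hE (Fin.zero_le h) hxE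
    obtain ⟨Y, hYdim, hYE, hYA, hYB⟩ := ih (i := fun h => i h.succ - 1)
      (j := fun h => j h.succ - 1) (E := fun h => (E h.succ).map (K ∙ x).mkQ)
      hi.sub_one_comp_succ hj.sub_one_comp_succ
      (fun g h hgh => map_mono (hE (Fin.succ_le_succ_iff.mpr hgh)))
      (quotientFlag_antitone hA x a) (quotientFlag_antitone hB x b)
      (fun h => by
        have := finrank_map_mkQ_add_one hx0 (hxE' h.succ)
        have := hEdim h.succ
        have := hi.apply_succ_pos h
        have := hj.apply_succ_pos h
        simp only [Fin.val_succ] at *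
        omega)
      (finrank_quotient_le_finrank_quotientFlag_add hi hAcodim hx0 ha)
      (finrank_quotient_le_finrank_quotientFlag_add hj hBcodim hx0 hb)
    refine ⟨Y.comap (K ∙ x).mkQ, ?_, fun h => ?_,
      le_finrank_inf_comap_of_quotientFlag hA hx0 hxA ha hYA,
      le_finrank_inf_comap_of_quotientFlag hB hx0 hxB hb hYB⟩
    · have := finrank_map_mkQ_inf_add_one hx0 mem_top Y
      rw [Submodule.map_top, range_mkQ, top_inf_eq, top_inf_eq, hYdim] at this
      exact this.symm
    · have := finrank_map_mkQ_inf_add_one hx0 (hxE' h) Y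
      induction h using Fin.cases with
      | zero =>
        simp only [Fin.val_zero]
        omega
      | succ h =>
        have := hYE h
        simp only [Fin.val_succ]
        omega

end Flags

namespace LinearMap

variable {V : Type*} [AddCommGroup V] [Module ℂ V] {B : V →ₗ⋆[ℂ] V →ₗ[ℂ] ℂ}

variable (B) in
def IsOrthonormal {ι : Type*} [DecidableEq ι] (v : ι → V) : Prop :=
  ∀ s t, B (v s) (v t) = if s = t then 1 else 0

theorem IsSymm.exists_smul_apply_smul_eq_one (hB : B.IsSymm) {x : V} (hx : 0 < (B x x).re) :
    ∃ c : ℂ, B (c • x) (c • x) = 1 := by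
  have hreal : B x x = ((B x x).re : ℂ) := (Complex.conj_eq_iff_re.mp (hB.eq x x)).symm
  set r := (B x x).re
  refine ⟨(r.sqrt)⁻¹, ?_⟩
  simp only [map_smul, LinearMap.map_smulₛₗ₂, smul_eq_mul]
  rw [hreal]
  simp only [Complex.conj_ofReal, ← Complex.ofReal_inv, ← Complex.ofReal_mul]
  rw [← mul_assoc, ← mul_inv, Real.mul_self_sqrt hx.le, inv_mul_cancel₀ hx.ne',
    Complex.ofReal_one]

theorem IsSymm.exists_isOrthonormal [FiniteDimensional ℂ V] (hB : B.IsSymm) :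
    ∀ {d : ℕ} (Z : Fin d → Submodule ℂ V), (∀ t, ∀ x ∈ Z t, x ≠ 0 → 0 < (B x x).re) →
      (∀ t, d ≤ finrank ℂ (Z t) + t) →
      ∃ y : Fin d → V, (∀ t, y t ∈ Z t) ∧ B.IsOrthonormal y
  | 0, _, _, _ => ⟨finZeroElim, finZeroElim, finZeroElim⟩
  | d + 1, Z, hpos, hdim => by
    obtain ⟨v, hvZ, hv0⟩ : ∃ v ∈ Z (Fin.last d), v ≠ 0 := by
      refine exists_mem_ne_zero_of_ne_bot fun hbot => ?_
      have := hdim (Fin.last d)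
      rw [hbot, finrank_bot, Fin.val_last] at this
      omega
    obtain ⟨c, hc⟩ := hB.exists_smul_apply_smul_eq_one (hpos _ v hvZ hv0)
    obtain ⟨w, hwZ, hw⟩ : ∃ w ∈ Z (Fin.last d), B w w = 1 :=
      ⟨c • v, (Z _).smul_mem c hvZ, hc⟩
    obtain ⟨y, hyZ, hy⟩ := hB.exists_isOrthonormal (fun t => Z t.castSucc ⊓ ker (B w))
      (fun t x hx => hpos _ x hx.1) fun t => by
        have := hdim t.castSucc
        have := (Z t.castSucc).finrank_le_finrank_inf_ker_add_one (B w)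
        simp only [Fin.val_castSucc] at *
        omega
    have horth : ∀ t, B w (y t) = 0 := fun t => (hyZ t).2
    refine ⟨Fin.snoc y w, fun t => ?_, fun s t => ?_⟩
    · induction t using Fin.lastCases with
      | last => simpa using hwZ
      | cast t => simpa using (hyZ t).1
    · induction s using Fin.lastCases <;> induction t using Fin.lastCases
      · simpa using hw
      · simp [horth, (Fin.castSucc_lt_last _).ne']
      · simp [← hB.eq w, horth, (Fin.castSucc_lt_last _).ne]
      · simpa using hy _ _

theorem IsOrthonormal.linearIndependent {ι : Type*} [Fintype ι] [DecidableEq ι] {y : ι → V}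
    (hy : B.IsOrthonormal y) : LinearIndependent ℂ y := by
  rw [Fintype.linearIndependent_iff]
  intro g hg s
  have := congrArg (B (y s)) hg
  simpa [hy s] using this

theorem apply_sum_smul_eq_mul_mul {ι κ : Type*} [Fintype ι] (y : ι → V) (c : Matrix ι κ ℂ)
    (f : V →ₗ[ℂ] V) (t t' : κ) :
    B (∑ s, c s t • y s) (f (∑ s, c s t' • y s)) =
      (c.conjTranspose * Matrix.of (fun s s' => B (y s) (f (y s'))) * c) t t' := by
  simp only [map_sum, map_smul, map_smulₛₗ, LinearMap.sum_apply, LinearMap.smul_apply,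
    Matrix.mul_apply, Matrix.conjTranspose_apply, Matrix.of_apply, smul_eq_mul, Finset.sum_mul,
    Finset.mul_sum]
  refine Finset.sum_congr rfl fun s _ => Finset.sum_congr rfl fun s' _ => ?_
  simp only [RCLike.star_def]
  ring

theorem IsOrthonormal.sum_apply_eq [FiniteDimensional ℂ V] {m : ℕ} {X : Submodule ℂ V}
    (hX : finrank ℂ X = m) {y z : Fin m → V} (hy : B.IsOrthonormal y) (hyX : ∀ t, y t ∈ X)
    (hz : B.IsOrthonormal z) (hzX : ∀ t, z t ∈ X) (f : V →ₗ[ℂ] V) :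
    ∑ t, B (z t) (f (z t)) = ∑ t, B (y t) (f (y t)) := by
  have hspan : span ℂ (Set.range y) = X := by
    refine eq_of_le_of_finrank_eq (span_le.mpr (Set.range_subset_iff.mpr hyX)) ?_
    rw [finrank_span_eq_card hy.linearIndependent, Fintype.card_fin, hX]
  choose c hc using fun t => (mem_span_range_iff_exists_fun ℂ).mp (hspan ▸ hzX t)
  set C : Matrix (Fin m) (Fin m) ℂ := Matrix.of fun s t => c t s
  have hG : ∀ (g : V →ₗ[ℂ] V) t t', B (z t) (g (z t')) =
      (C.conjTranspose * Matrix.of (fun s s' => B (y s) (g (y s'))) * C) t t' := by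
    intro g t t'
    rw [← hc t, ← hc t']
    exact apply_sum_smul_eq_mul_mul y C g t t'
  have hCC : C * C.conjTranspose = 1 := by
    refine mul_eq_one_comm.mp (Matrix.ext fun t t' => ?_)
    have := hG LinearMap.id t t'
    rw [show Matrix.of (fun s s' => B (y s) (LinearMap.id (y s'))) = 1 from
      Matrix.ext fun s s' => by simp [hy s s', Matrix.one_apply], Matrix.mul_one] at this
    rw [← this, Matrix.one_apply]
    simpa using hz t t'
  calc ∑ t, B (z t) (f (z t))
      = (C.conjTranspose * Matrix.of (fun s s' => B (y s) (f (y s'))) * C).trace := by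
        simp only [Matrix.trace, Matrix.diag, hG]
    _ = ∑ t, B (y t) (f (y t)) := by
        rw [Matrix.trace_mul_comm, ← Matrix.mul_assoc, hCC, Matrix.one_mul]
        simp [Matrix.trace]

end LinearMap

namespace Matrix

variable {K m n : Type*} [Field K]

def colSpan (U : Matrix m n K) (s : Finset n) : Submodule K (m → K) :=
  span K (U.col '' s)

theorem mem_colSpan_iff [Fintype n] {U : Matrix m n K} {s : Finset n} {x : m → K} :
    x ∈ U.colSpan s ↔ ∃ v : n → K, (∀ t ∉ s, v t = 0) ∧ U *ᵥ v = x := by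
  rw [colSpan, Finsupp.mem_span_image_iff_linearCombination]
  constructor
  · rintro ⟨l, hl, rfl⟩
    refine ⟨l, fun t ht => Finsupp.notMem_support_iff.mp fun h => ht (hl h), ?_⟩
    rw [Finsupp.linearCombination_apply, Finsupp.sum_fintype _ _ (by simp), mulVec_eq_sum]
    simp [col]
  · rintro ⟨v, hv, rfl⟩
    refine ⟨Finsupp.equivFunOnFinite.symm v, fun t ht => ?_, ?_⟩
    · by_contra h
      exact Finsupp.mem_support_iff.mp ht (hv t h)
    rw [Finsupp.linearCombination_apply, Finsupp.sum_fintype _ _ (by simp), mulVec_eq_sum]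
    simp [col]

theorem colSpan_mono (U : Matrix m n K) {s s' : Finset n} (h : s ⊆ s') :
    U.colSpan s ≤ U.colSpan s' :=
  span_mono (Set.image_mono (Finset.coe_subset.mpr h))

theorem finrank_colSpan {U : Matrix m n K} (hU : LinearIndependent K U.col) (s : Finset n) :
    finrank K (U.colSpan s) = s.card := by
  rw [colSpan, Set.image_eq_range]
  exact (finrank_span_eq_card (hU.comp _ Subtype.val_injective)).trans (by simp)

end Matrix

section Pairing

variable {p q : ℕ}

theorem Jmat_mul_Jmat : Jmat p q * Jmat p q = 1 := by
  rw [Jmat, diagonal_mul_diagonal, ← diagonal_one]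
  congr 1
  ext t
  split_ifs <;> norm_num

theorem conjTranspose_mul_Jmat_mul_self {U : Matrix (Fin (p + q)) (Fin (p + q)) ℂ}
    (hU : U * Jmat p q * Uᴴ = Jmat p q) : Uᴴ * Jmat p q * U = Jmat p q := by
  have h : (Uᴴ * Jmat p q) * (U * Jmat p q) = 1 :=
    mul_eq_one_comm.mp (by rw [← Matrix.mul_assoc, hU, Jmat_mul_Jmat])
  calc Uᴴ * Jmat p q * U = Uᴴ * Jmat p q * U * (Jmat p q * Jmat p q) := by
        rw [Jmat_mul_Jmat, Matrix.mul_one]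
    _ = (Uᴴ * Jmat p q) * (U * Jmat p q) * Jmat p q := by simp only [Matrix.mul_assoc]
    _ = Jmat p q := by rw [h, Matrix.one_mul]

theorem pairing_eq_dotProduct (z w : Fin (p + q) → ℂ) :
    pairing p q z w = star w ⬝ᵥ (Jmat p q *ᵥ z) := by
  simp only [pairing, Jmat, mulVec_diagonal, dotProduct, Pi.star_apply, RCLike.star_def]
  refine Finset.sum_congr rfl fun t _ => ?_
  split_ifs <;> ring

theorem pairing_mulVec_mulVec {U : Matrix (Fin (p + q)) (Fin (p + q)) ℂ}
    (hU : Uᴴ * Jmat p q * U = Jmat p q) (x y : Fin (p + q) → ℂ) :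
    pairing p q (U *ᵥ x) (U *ᵥ y) = pairing p q x y := by
  rw [pairing_eq_dotProduct, pairing_eq_dotProduct, star_mulVec, mulVec_mulVec, dotProduct_mulVec,
    vecMul_vecMul, ← Matrix.mul_assoc, hU, ← dotProduct_mulVec]

theorem IsAdmissible.exists_diagonalization {hp : 0 < p} {hq : 0 < q}
    {M : Matrix (Fin (p + q)) (Fin (p + q)) ℂ} {lam : Fin p → ℝ} {mu : Fin q → ℝ}
    (hM : IsAdmissible p q hp hq M lam mu) :
    ∃ U, IsUnit U ∧ Uᴴ * Jmat p q * U = Jmat p q ∧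
      M * U = U * diagonal (diagEntries p q lam mu) := by
  obtain ⟨-, -, -, -, U, hU, hUJ, rfl⟩ := hM
  refine ⟨U, hU, conjTranspose_mul_Jmat_mul_self hUJ, ?_⟩
  rw [Matrix.mul_assoc, nonsing_inv_mul _ ((isUnit_iff_isUnit_det U).mp hU), Matrix.mul_one]

theorem re_pairing_self (v : Fin (p + q) → ℂ) :
    (pairing p q v v).re =
      ∑ t : Fin (p + q), (if (t : ℕ) < p then 1 else -1) * Complex.normSq (v t) := by
  simp only [pairing, Complex.re_sum]
  refine Finset.sum_congr rfl fun t _ => ?_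
  split_ifs <;> simp [Complex.mul_conj]

theorem re_pairing_diagonal_mulVec_sub (d v : Fin (p + q) → ℂ) (θ : ℝ) :
    (pairing p q (diagonal d *ᵥ v) v).re - θ * (pairing p q v v).re =
      ∑ t : Fin (p + q),
        (if (t : ℕ) < p then 1 else -1) * ((d t).re - θ) * Complex.normSq (v t) := by
  simp only [pairing, Complex.re_sum, Finset.mul_sum, ← Finset.sum_sub_distrib,
    mulVec_diagonal]
  refine Finset.sum_congr rfl fun t _ => ?_
  split_ifs <;> simp [mul_assoc, Complex.mul_conj] <;> ring

/-- Conjugate-linear in the first argument, as in Mathlib; hence the swap in `pairingForm_apply`. -/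
noncomputable def pairingForm (p q : ℕ) :
    (Fin (p + q) → ℂ) →ₗ⋆[ℂ] (Fin (p + q) → ℂ) →ₗ[ℂ] ℂ :=
  Matrix.toLinearMapₛₗ₂' ℂ (starRingEnd ℂ) (RingHom.id ℂ) (Jmat p q)

theorem pairingForm_apply (w z : Fin (p + q) → ℂ) : pairingForm p q w z = pairing p q z w := by
  simp only [pairingForm, Matrix.toLinearMapₛₗ₂'_apply, Jmat, Matrix.diagonal_apply, pairing]
  refine Finset.sum_congr rfl fun t _ => ?_
  split_ifs <;> simp [*] <;> ring

theorem pairingForm_isSymm : (pairingForm p q).IsSymm := by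
  refine ⟨fun w z => ?_⟩
  simp only [pairingForm_apply, pairing, map_sum]
  refine Finset.sum_congr rfl fun t _ => ?_
  split_ifs <;> simp [mul_comm]

theorem pairing_add_left (x y w : Fin (p + q) → ℂ) :
    pairing p q (x + y) w = pairing p q x w + pairing p q y w := by
  simp only [← pairingForm_apply, map_add]

theorem sum_pairing_mulVec_eq {m : ℕ} {X : Submodule ℂ (Fin (p + q) → ℂ)}
    (hX : finrank ℂ X = m) {y z : Fin m → Fin (p + q) → ℂ}
    (hy : (pairingForm p q).IsOrthonormal y) (hyX : ∀ t, y t ∈ X)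
    (hz : (pairingForm p q).IsOrthonormal z) (hzX : ∀ t, z t ∈ X)
    (M : Matrix (Fin (p + q)) (Fin (p + q)) ℂ) :
    ∑ t, pairing p q (M *ᵥ z t) (z t) = ∑ t, pairing p q (M *ᵥ y t) (y t) := by
  simpa only [pairingForm_apply, Matrix.mulVecLin_apply] using
    hy.sum_apply_eq hX hyX hz hzX M.mulVecLin

end Pairing

section Spectral

variable {p q : ℕ}

/-- The positions of `λ_1, …, λ_c` on the diagonal of `Λ = diag(λ_p, …, λ_1, μ_1, …, μ_q)`,
so that the columns of `U` there span the eigenvectors of `U Λ U⁻¹` for these eigenvalues. -/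
def lowBlock (p q c : ℕ) : Finset (Fin (p + q)) :=
  {t | p ≤ t + c ∧ (t : ℕ) < p}

theorem mem_lowBlock {c : ℕ} {t : Fin (p + q)} :
    t ∈ lowBlock p q c ↔ p ≤ t + c ∧ (t : ℕ) < p := by
  simp [lowBlock]

theorem lowBlock_mono {c c' : ℕ} (h : c ≤ c') : lowBlock p q c ⊆ lowBlock p q c' := by
  intro t ht
  rw [mem_lowBlock] at *
  omega

theorem card_lowBlock {c : ℕ} (hc : c ≤ p) : (lowBlock p q c).card = c := by
  have : (lowBlock p q c).map Fin.valEmbedding = Finset.Ico (p - c) p := by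
    ext n
    simp only [Finset.mem_map, mem_lowBlock, Fin.valEmbedding_apply, Finset.mem_Ico]
    constructor
    · rintro ⟨t, ht, rfl⟩
      omega
    · intro hn
      exact ⟨⟨n, by omega⟩, by simp only; omega, rfl⟩
  rw [← Finset.card_map, this, Nat.card_Ico]
  omega

variable {U M : Matrix (Fin (p + q)) (Fin (p + q)) ℂ} {lam : Fin p → ℝ} {mu : Fin q → ℝ}

theorem re_pairing_mulVec_sub_eq_sum (hUJ : Uᴴ * Jmat p q * U = Jmat p q)
    (hMU : M * U = U * diagonal (diagEntries p q lam mu)) (v : Fin (p + q) → ℂ) (θ : ℝ) :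
    (pairing p q (M *ᵥ (U *ᵥ v)) (U *ᵥ v)).re - θ * (pairing p q (U *ᵥ v) (U *ᵥ v)).re =
      ∑ t : Fin (p + q), (if (t : ℕ) < p then 1 else -1) *
        ((diagEntries p q lam mu t).re - θ) * Complex.normSq (v t) := by
  rw [mulVec_mulVec, hMU, ← mulVec_mulVec, pairing_mulVec_mulVec hUJ, pairing_mulVec_mulVec hUJ,
    re_pairing_diagonal_mulVec_sub]

theorem re_pairing_self_pos (hUJ : Uᴴ * Jmat p q * U = Jmat p q) {c : ℕ} {x : Fin (p + q) → ℂ}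
    (hx : x ∈ U.colSpan (lowBlock p q c)) (hx0 : x ≠ 0) : 0 < (pairing p q x x).re := by
  obtain ⟨v, hv, rfl⟩ := mem_colSpan_iff.mp hx
  have hvp : ∀ t, v t ≠ 0 → (t : ℕ) < p := fun t ht =>
    (mem_lowBlock.mp (not_not.mp (mt (hv t) ht))).2
  obtain ⟨t₀, ht₀⟩ := Function.ne_iff.mp (fun h : v = 0 => hx0 (by rw [h, mulVec_zero]))
  rw [pairing_mulVec_mulVec hUJ, re_pairing_self]
  refine Finset.sum_pos' (fun t _ => ?_) ⟨t₀, Finset.mem_univ _, ?_⟩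
  · by_cases ht : v t = 0
    · simp [ht]
    · simp [hvp t ht, Complex.normSq_nonneg]
  · simpa [hvp t₀ ht₀] using ht₀

theorem re_pairing_mulVec_le (hUJ : Uᴴ * Jmat p q * U = Jmat p q)
    (hMU : M * U = U * diagonal (diagEntries p q lam mu)) (hlam : Monotone lam) (k : Fin p)
    {x : Fin (p + q) → ℂ} (hx : x ∈ U.colSpan (lowBlock p q (k + 1))) :
    (pairing p q (M *ᵥ x) x).re ≤ lam k * (pairing p q x x).re := by
  obtain ⟨v, hv, rfl⟩ := mem_colSpan_iff.mp hx
  rw [← sub_nonpos, re_pairing_mulVec_sub_eq_sum hUJ hMU]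
  refine Finset.sum_nonpos fun t _ => ?_
  by_cases ht : t ∈ lowBlock p q (k + 1)
  · rw [mem_lowBlock] at ht
    have : lam ⟨p - 1 - t, by omega⟩ ≤ lam k :=
      hlam (Fin.le_iff_val_le_val.mpr (by dsimp only; omega))
    simp only [diagEntries, dif_pos ht.2, if_pos ht.2, Complex.ofReal_re, one_mul]
    exact mul_nonpos_of_nonpos_of_nonneg (by linarith) (Complex.normSq_nonneg _)
  · simp [hv t ht]

theorem le_re_pairing_mulVec (hUJ : Uᴴ * Jmat p q * U = Jmat p q)
    (hMU : M * U = U * diagonal (diagEntries p q lam mu)) (hlam : Monotone lam) (hmu : Antitone mu)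
    {hp : 0 < p} {hq : 0 < q} (hgap : mu ⟨0, hq⟩ < lam ⟨0, hp⟩) (i : Fin p)
    {x : Fin (p + q) → ℂ} (hx : x ∈ U.colSpan (lowBlock p q i)ᶜ) :
    lam i * (pairing p q x x).re ≤ (pairing p q (M *ᵥ x) x).re := by
  obtain ⟨v, hv, rfl⟩ := mem_colSpan_iff.mp hx
  rw [← sub_nonneg, re_pairing_mulVec_sub_eq_sum hUJ hMU]
  refine Finset.sum_nonneg fun t _ => ?_
  by_cases ht : t ∈ (lowBlock p q i)ᶜ
  · rw [Finset.mem_compl, mem_lowBlock] at ht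
    refine mul_nonneg ?_ (Complex.normSq_nonneg _)
    by_cases htp : (t : ℕ) < p
    · have : lam i ≤ lam ⟨p - 1 - t, by omega⟩ :=
        hlam (Fin.le_iff_val_le_val.mpr (by dsimp only; omega))
      simp only [diagEntries, dif_pos htp, if_pos htp, Complex.ofReal_re, one_mul]
      linarith
    · have : mu ⟨t - p, by omega⟩ ≤ mu ⟨0, hq⟩ :=
        hmu (Fin.le_iff_val_le_val.mpr (Nat.zero_le _))
      have : lam ⟨0, hp⟩ ≤ lam i := hlam (Fin.le_iff_val_le_val.mpr (Nat.zero_le _))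
      simp only [diagEntries, dif_neg htp, if_neg htp, Complex.ofReal_re]
      linarith
  · simp [hv t ht]

theorem exists_isOrthonormal_sum_re_le (hUJ : Uᴴ * Jmat p q * U = Jmat p q)
    (hMU : M * U = U * diagonal (diagEntries p q lam mu)) (hlam : Monotone lam) {m : ℕ}
    {X : Submodule ℂ (Fin (p + q) → ℂ)} (k : Fin m → Fin p)
    (hXk : ∀ h : Fin m, (h : ℕ) + 1 ≤ finrank ℂ ↥(U.colSpan (lowBlock p q (k h + 1)) ⊓ X)) :
    ∃ w : Fin m → Fin (p + q) → ℂ, (∀ t, w t ∈ X) ∧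
      (pairingForm p q).IsOrthonormal w ∧
      ∑ t, (pairing p q (M *ᵥ w t) (w t)).re ≤ ∑ t, lam (k t) := by
  -- the subspaces grow with `h`, so they are fed to `exists_isOrthonormal` in reverse order
  obtain ⟨w, hwZ, hw⟩ := pairingForm_isSymm.exists_isOrthonormal
    (fun t => U.colSpan (lowBlock p q (k t.rev + 1)) ⊓ X)
    (fun t x hx hx0 => by simpa [pairingForm_apply] using re_pairing_self_pos hUJ hx.1 hx0)
    (fun t => by have := hXk t.rev; rw [Fin.val_rev] at this; omega)
  refine ⟨w ∘ Fin.rev, fun t => (hwZ _).2, fun s t => by simpa using hw s.rev t.rev,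
    Finset.sum_le_sum fun t _ => ?_⟩
  have h1 : pairing p q (w t.rev) (w t.rev) = 1 := by simpa [pairingForm_apply] using hw t.rev t.rev
  have := re_pairing_mulVec_le hUJ hMU hlam (k t) (x := w t.rev) (by simpa using (hwZ t.rev).1)
  simpa [h1] using this

theorem re_pairing_self_pos_of_finrank_inf (hUJ : Uᴴ * Jmat p q * U = Jmat p q) {m : ℕ}
    {X : Submodule ℂ (Fin (p + q) → ℂ)} (hX : finrank ℂ X = m) (c : Fin m → ℕ)
    (hXc : ∀ h : Fin m, (h : ℕ) + 1 ≤ finrank ℂ ↥(U.colSpan (lowBlock p q (c h)) ⊓ X)) :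
    ∀ x ∈ X, x ≠ 0 → 0 < (pairing p q x x).re := by
  intro x hx hx0
  have hm : 0 < m := by
    rw [← hX]
    exact finrank_pos_iff_exists_ne_zero.mpr ⟨⟨x, hx⟩, by simpa using hx0⟩
  set h : Fin m := ⟨m - 1, by omega⟩
  have hXE : U.colSpan (lowBlock p q (c h)) ⊓ X = X := by
    refine eq_of_le_of_finrank_le inf_le_right ?_
    have := hXc h
    have : (h : ℕ) = m - 1 := rfl
    omega
  exact re_pairing_self_pos hUJ (hXE ▸ hx : x ∈ _ ⊓ X).1 hx0

theorem exists_isOrthonormal_le_sum_re (hUJ : Uᴴ * Jmat p q * U = Jmat p q)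
    (hMU : M * U = U * diagonal (diagEntries p q lam mu)) (hlam : Monotone lam) (hmu : Antitone mu)
    {hp : 0 < p} {hq : 0 < q} (hgap : mu ⟨0, hq⟩ < lam ⟨0, hp⟩) {m : ℕ}
    {X : Submodule ℂ (Fin (p + q) → ℂ)} (hXpos : ∀ x ∈ X, x ≠ 0 → 0 < (pairing p q x x).re)
    (i : Fin m → Fin p)
    (hXi : ∀ h : Fin m, m ≤ finrank ℂ ↥(U.colSpan (lowBlock p q (i h))ᶜ ⊓ X) + h) :
    ∃ y : Fin m → Fin (p + q) → ℂ, (∀ t, y t ∈ X) ∧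
      (pairingForm p q).IsOrthonormal y ∧
      ∑ t, lam (i t) ≤ ∑ t, (pairing p q (M *ᵥ y t) (y t)).re := by
  obtain ⟨y, hyZ, hy⟩ := pairingForm_isSymm.exists_isOrthonormal
    (fun t => U.colSpan (lowBlock p q (i t))ᶜ ⊓ X)
    (fun t x hx hx0 => by simpa [pairingForm_apply] using hXpos x hx.2 hx0) hXi
  refine ⟨y, fun t => (hyZ t).2, hy, Finset.sum_le_sum fun t _ => ?_⟩
  have h1 : pairing p q (y t) (y t) = 1 := by simpa [pairingForm_apply] using hy t t
  simpa [h1] using le_re_pairing_mulVec hUJ hMU hlam hmu hgap (i t) (hyZ t).1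

theorem exists_subspace_meeting_spectral_flags {UA UB UC : Matrix (Fin (p + q)) (Fin (p + q)) ℂ}
    (hUA : IsUnit UA) (hUB : IsUnit UB) (hUC : IsUnit UC) {m : ℕ} {i j : Fin m → Fin p}
    (hi : StrictMono i) (hj : StrictMono j) (hrange : ∀ h : Fin m, (i h : ℕ) + j h - h < p) :
    ∃ X : Submodule ℂ (Fin (p + q) → ℂ), finrank ℂ X = m ∧
      (∀ h : Fin m,
        (h : ℕ) + 1 ≤ finrank ℂ ↥(UC.colSpan (lowBlock p q (i h + j h - h + 1)) ⊓ X)) ∧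
      (∀ h : Fin m, m ≤ finrank ℂ ↥(UA.colSpan (lowBlock p q (i h))ᶜ ⊓ X) + h) ∧
      ∀ h : Fin m, m ≤ finrank ℂ ↥(UB.colSpan (lowBlock p q (j h))ᶜ ⊓ X) + h := by
  have hi' : StrictMono fun h => (i h : ℕ) := Fin.val_strictMono.comp hi
  have hj' : StrictMono fun h => (j h : ℕ) := Fin.val_strictMono.comp hj
  have hcodim : ∀ (U : Matrix (Fin (p + q)) (Fin (p + q)) ℂ), IsUnit U → ∀ c : Fin p,
      finrank ℂ (Fin (p + q) → ℂ) ≤ finrank ℂ (U.colSpan (lowBlock p q c)ᶜ) + c := by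
    intro U hU c
    rw [finrank_colSpan (linearIndependent_cols_iff_isUnit.mpr hU), Finset.card_compl,
      card_lowBlock c.isLt.le, Fintype.card_fin, finrank_fin_fun]
    omega
  refine exists_subspace_meeting_flags hi' hj'
    (fun g h hgh => UC.colSpan_mono (lowBlock_mono ?_))
    (fun g h hgh => UA.colSpan_mono (Finset.compl_subset_compl.mpr
      (lowBlock_mono (hi.monotone hgh))))
    (fun g h hgh => UB.colSpan_mono (Finset.compl_subset_compl.mpr
      (lowBlock_mono (hj.monotone hgh))))
    (fun h => ?_) (fun h => hcodim UA hUA (i h)) (fun h => hcodim UB hUB (j h))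
  · have := hi'.apply_add_le_apply_add hgh
    have := hj'.apply_add_le_apply_add hgh
    omega
  · rw [finrank_colSpan (linearIndependent_cols_iff_isUnit.mpr hUC), card_lowBlock (hrange h)]
    have := hj'.apply_add_le_apply_add (show (⟨0, h.pos⟩ : Fin m) ≤ h from Nat.zero_le _)
    simp only [add_zero] at this
    omega

end Spectral

/-- Thompson–Freede analogue: if `A`, `B`, `C = A + B` are admissible
and `1 ≤ i_1 < ⋯ < i_m ≤ p`, `1 ≤ j_1 < ⋯ < j_m ≤ p` (encoded 0-indexed by strictly
monotone `i j : Fin m → Fin p`) with `i_m + j_m ≤ m + p` (0-indexed: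
`i(m-1) + j(m-1) + 2 ≤ m + p`), then
`Σ_h λ_{i_h + j_h − h}(C) ≥ Σ_h λ_{i_h}(A) + Σ_h λ_{j_h}(B)`.
(The hypothesis `hrange`, that the 0-indexed indices `i_h + j_h − h` lie in range, is
forced by the other hypotheses.) -/
theorem thompson_freede
    (p q : ℕ) (hp : 0 < p) (hq : 0 < q)
    (A B : Matrix (Fin (p + q)) (Fin (p + q)) ℂ)
    (lamA : Fin p → ℝ) (muA : Fin q → ℝ)
    (lamB : Fin p → ℝ) (muB : Fin q → ℝ)
    (lamC : Fin p → ℝ) (muC : Fin q → ℝ)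
    (hA : IsAdmissible p q hp hq A lamA muA)
    (hB : IsAdmissible p q hp hq B lamB muB)
    (hC : IsAdmissible p q hp hq (A + B) lamC muC)
    (m : ℕ)
    (i j : Fin m → Fin p) (hi : StrictMono i) (hj : StrictMono j)
    (hrange : ∀ h : Fin m, (i h : ℕ) + (j h : ℕ) - (h : ℕ) < p) :
    ∑ h : Fin m, lamA (i h) + ∑ h : Fin m, lamB (j h) ≤
      ∑ h : Fin m, lamC ⟨(i h : ℕ) + (j h : ℕ) - (h : ℕ), hrange h⟩ := by
  obtain ⟨UA, hUA, hUAJ, hAU⟩ := hA.exists_diagonalization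
  obtain ⟨UB, hUB, hUBJ, hBU⟩ := hB.exists_diagonalization
  obtain ⟨UC, hUC, hUCJ, hCU⟩ := hC.exists_diagonalization
  obtain ⟨-, hlamA, hmuA, hgapA, -⟩ := hA
  obtain ⟨-, hlamB, hmuB, hgapB, -⟩ := hB
  obtain ⟨-, hlamC, -⟩ := hC
  obtain ⟨X, hX, hXC, hXA, hXB⟩ := exists_subspace_meeting_spectral_flags hUA hUB hUC hi hj hrange
  obtain ⟨w, hwX, hw, hwC⟩ := exists_isOrthonormal_sum_re_le hUCJ hCU hlamC
    (fun h => ⟨i h + j h - h, hrange h⟩) hXC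
  have hXpos := re_pairing_self_pos_of_finrank_inf hUCJ hX _ hXC
  obtain ⟨y, hyX, hy, hyA⟩ := exists_isOrthonormal_le_sum_re hUAJ hAU hlamA hmuA hgapA hXpos i hXA
  obtain ⟨z, hzX, hz, hzB⟩ := exists_isOrthonormal_le_sum_re hUBJ hBU hlamB hmuB hgapB hXpos j hXB
  calc ∑ h, lamA (i h) + ∑ h, lamB (j h)
      ≤ ∑ t, (pairing p q (A *ᵥ y t) (y t)).re + ∑ t, (pairing p q (B *ᵥ z t) (z t)).re :=
        add_le_add hyA hzB
    _ = ∑ t, (pairing p q ((A + B) *ᵥ w t) (w t)).re := by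
        rw [← Complex.re_sum, ← Complex.re_sum, sum_pairing_mulVec_eq hX hw hwX hy hyX,
          sum_pairing_mulVec_eq hX hw hwX hz hzX, ← Complex.add_re, ← Finset.sum_add_distrib,
          Complex.re_sum]
        simp only [add_mulVec, pairing_add_left]
    _ ≤ _ := hwC
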